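/- Let N ≥ 2 and let q⁻, q, q⁺ : ℝ^N → ℝ be smooth (C^∞). For λ ∈ ℝ define the forward Miwa shift (S_λ f)(t₁,…,t_N) = f(t₁ + λ, t₂ − λ²/2, …, t_j + (−1)^{j+1}λ^j/j, …) and the backward Miwa shift (S_λ⁻ f)(t₁,…,t_N) = f(t₁ − λ, t₂ + λ²/2, …, t_j − (−1)^{j+1}λ^j/j, …). Fix t ∈ ℝ^N. Then, as λ → 0, (1/λ)·( exp(S_λq(t) − q(t)) − exp(q(t) − S_λ⁻q(t)) ) + λ·( exp(q(t) − S_λq⁻(t)) − exp(S_λ⁻q⁺(t) − q(t)) ) = λ·( ∂₁∂₁q(t) − exp(q⁺(t) − q(t)) + exp(q(t) − q⁻(t)) ) + O(λ²). That is, the leading coefficient of the Miwa expansion of the discrete Toda equation is the first Toda equation ∂₁∂₁q = exp(q⁺ − q) − exp(q − q⁻). -/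

import Mathlib

/-- Partial derivative of a function on `ℝ^N` with respect to the `i`-th coordinate. -/
noncomputable def partialD {N : ℕ} (i : Fin N) (f : (Fin N → ℝ) → ℝ) : (Fin N → ℝ) → ℝ :=
  fun t => deriv (fun s => f (Function.update t i s)) (t i)

/-- Forward Miwa shift (with `c = 1`):
`(S_λ f)(t₁,…,t_N) = f(t₁ + λ, t₂ − λ²/2, …, t_j + (−1)^{j+1} λ^j / j, …)`. -/
noncomputable def miwaShift (N : ℕ) (lam : ℝ) (f : (Fin N → ℝ) → ℝ) : (Fin N → ℝ) → ℝ :=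
  fun t => f (fun j => t j +
    (-1 : ℝ) ^ (((j : ℕ) + 1) + 1) * lam ^ ((j : ℕ) + 1) / (((j : ℕ) + 1 : ℕ) : ℝ))

/-- Backward Miwa shift:
`(S_λ⁻ f)(t₁,…,t_N) = f(t₁ − λ, t₂ + λ²/2, …, t_j − (−1)^{j+1} λ^j / j, …)`. -/
noncomputable def miwaShiftB (N : ℕ) (lam : ℝ) (f : (Fin N → ℝ) → ℝ) : (Fin N → ℝ) → ℝ :=
  fun t => f (fun j => t j -
    (-1 : ℝ) ^ (((j : ℕ) + 1) + 1) * lam ^ ((j : ℕ) + 1) / (((j : ℕ) + 1 : ℕ) : ℝ))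

open Real Filter Asymptotics
open scoped ContDiff

section Aux

/-- Integrating a big-O bound on the derivative once. -/
lemma TodaAux.step_bigO {f : ℝ → ℝ} (hf : Differentiable ℝ f) (h0 : f 0 = 0)
    {n : ℕ} (h : deriv f =O[nhds 0] fun x => x ^ n) :
    f =O[nhds 0] fun x => x ^ (n + 1) := by
  obtain ⟨c, hc⟩ := h.bound
  rw [Metric.eventually_nhds_iff] at hc
  obtain ⟨δ, hδ, hb⟩ := hc
  rw [Asymptotics.isBigO_iff]
  refine ⟨max c 0, Metric.eventually_nhds_iff.2 ⟨δ, hδ, fun {y} hy => ?_⟩⟩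
  have hy' : ‖y‖ < δ := by simpa [Real.dist_eq] using hy
  have key : ‖f y - f 0‖ ≤ (max c 0 * ‖y‖ ^ n) * ‖y - 0‖ := by
    apply Convex.norm_image_sub_le_of_norm_hasDerivWithin_le
      (f' := deriv f) (s := Metric.closedBall (0:ℝ) ‖y‖)
    · intro x _
      exact (hf x).hasDerivAt.hasDerivWithinAt
    · intro x hx
      have hx' : ‖x‖ ≤ ‖y‖ := by
        simpa [Real.dist_eq] using hx
      have hxd : dist x 0 < δ := by
        simpa [Real.dist_eq] using lt_of_le_of_lt hx' hy'
      calc ‖deriv f x‖ ≤ c * ‖x ^ n‖ := hb hxd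
        _ ≤ max c 0 * ‖y‖ ^ n := by
            rw [norm_pow]
            exact mul_le_mul (le_max_left _ _) (pow_le_pow_left₀ (norm_nonneg _) hx' n)
              (by positivity) (le_max_right _ _)
    · exact convex_closedBall _ _
    · simp
    · simp [Metric.mem_closedBall, Real.dist_eq, abs_nonneg, le_abs_self]
  rw [h0, sub_zero, sub_zero] at key
  calc ‖f y‖ ≤ (max c 0 * ‖y‖ ^ n) * ‖y‖ := key
    _ = max c 0 * ‖y ^ (n+1)‖ := by rw [norm_pow]; ring

/-- A smooth function vanishing to second order at `0` is `O(x³)`. -/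
lemma TodaAux.cube_bigO {f : ℝ → ℝ} (hf : ContDiff ℝ (∞ : WithTop ℕ∞) f) (h0 : f 0 = 0)
    (h1 : deriv f 0 = 0) (h2 : deriv (deriv f) 0 = 0) :
    f =O[nhds 0] fun x => x ^ 3 := by
  have hf1 : ContDiff ℝ (∞ : WithTop ℕ∞) (deriv f) := (contDiff_infty_iff_deriv.mp hf).2
  have hf2 : ContDiff ℝ (∞ : WithTop ℕ∞) (deriv (deriv f)) := (contDiff_infty_iff_deriv.mp hf1).2
  have b0 : deriv (deriv f) =O[nhds 0] fun x => x ^ 1 := by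
    have := ((hf2.differentiable (by simp)) 0).isBigO_sub
    simpa [h2] using this
  have b1 := TodaAux.step_bigO (hf1.differentiable (by simp)) h1 b0
  simpa using TodaAux.step_bigO (hf.differentiable (by simp)) h0 b1

/-- The forward Miwa curve through `t`. -/
noncomputable def TodaAux.phi (N : ℕ) (t : Fin N → ℝ) (lam : ℝ) : Fin N → ℝ :=
  fun j => t j + (-1 : ℝ) ^ (((j : ℕ) + 1) + 1) * lam ^ ((j : ℕ) + 1) / (((j : ℕ) + 1 : ℕ) : ℝ)

/-- The backward Miwa curve through `t`. -/
noncomputable def TodaAux.psi (N : ℕ) (t : Fin N → ℝ) (lam : ℝ) : Fin N → ℝ :=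
  fun j => t j - (-1 : ℝ) ^ (((j : ℕ) + 1) + 1) * lam ^ ((j : ℕ) + 1) / (((j : ℕ) + 1 : ℕ) : ℝ)

/-- The velocity of the forward Miwa curve. -/
noncomputable def TodaAux.phid (N : ℕ) (lam : ℝ) : Fin N → ℝ :=
  fun j => (-1 : ℝ) ^ (((j : ℕ) + 1) + 1) * lam ^ (j : ℕ)

namespace TodaAux

variable {N : ℕ}

lemma phi_zero (t : Fin N → ℝ) : phi N t 0 = t := by
  funext j; simp [phi]

lemma psi_zero (t : Fin N → ℝ) : psi N t 0 = t := by
  funext j; simp [psi]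

lemma phid_zero (h : 0 < N) : phid N 0 = Pi.single (⟨0, h⟩ : Fin N) (1 : ℝ) := by
  funext j
  rcases j with ⟨k, hk⟩
  simp only [phid, Pi.single_apply]
  rcases k with _ | k
  · norm_num [Fin.ext_iff]
  · simp [Fin.ext_iff, pow_succ]

lemma hasDerivAt_phi (t : Fin N → ℝ) (lam : ℝ) :
    HasDerivAt (phi N t) (phid N lam) lam := by
  rw [hasDerivAt_pi]
  intro j
  have h1 : HasDerivAt
      (fun l : ℝ => t j + (-1 : ℝ) ^ (((j : ℕ) + 1) + 1) * l ^ ((j : ℕ) + 1) / (((j : ℕ) + 1 : ℕ) : ℝ))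
      ((-1 : ℝ) ^ (((j : ℕ) + 1) + 1) * ((((j : ℕ) + 1 : ℕ) : ℝ) * lam ^ ((j : ℕ) + 1 - 1)) / (((j : ℕ) + 1 : ℕ) : ℝ)) lam :=
    (((hasDerivAt_pow ((j : ℕ) + 1) lam).const_mul _).div_const _).const_add _
  refine h1.congr_deriv (Eq.symm ?_)
  have hne : ((((j : ℕ) + 1 : ℕ)) : ℝ) ≠ 0 := by positivity
  show (-1 : ℝ) ^ (((j : ℕ) + 1) + 1) * lam ^ (j : ℕ) = _
  rw [Nat.add_sub_cancel]
  field_simp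

lemma hasDerivAt_psi (t : Fin N → ℝ) (lam : ℝ) :
    HasDerivAt (psi N t) (-(phid N lam)) lam := by
  rw [hasDerivAt_pi]
  intro j
  simp only [Pi.neg_apply]
  have h1 : HasDerivAt
      (fun l : ℝ => t j - (-1 : ℝ) ^ (((j : ℕ) + 1) + 1) * l ^ ((j : ℕ) + 1) / (((j : ℕ) + 1 : ℕ) : ℝ))
      (-((-1 : ℝ) ^ (((j : ℕ) + 1) + 1) * ((((j : ℕ) + 1 : ℕ) : ℝ) * lam ^ ((j : ℕ) + 1 - 1)) / (((j : ℕ) + 1 : ℕ) : ℝ))) lam :=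
    (((hasDerivAt_pow ((j : ℕ) + 1) lam).const_mul _).div_const _).const_sub _
  refine h1.congr_deriv (Eq.symm ?_)
  have hne : ((((j : ℕ) + 1 : ℕ)) : ℝ) ≠ 0 := by positivity
  show -(phid N lam j) = _
  simp only [phid]
  rw [Nat.add_sub_cancel]
  field_simp

lemma hasDerivAt_phid_zero :
    HasDerivAt (phid N) (fun j : Fin N => if (j : ℕ) = 1 then (-1 : ℝ) else 0) 0 := by
  rw [hasDerivAt_pi]
  intro j
  have h1 : HasDerivAt (fun l : ℝ => (-1 : ℝ) ^ (((j : ℕ) + 1) + 1) * l ^ (j : ℕ))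
      ((-1 : ℝ) ^ (((j : ℕ) + 1) + 1) * (((j : ℕ) : ℝ) * (0 : ℝ) ^ ((j : ℕ) - 1))) 0 :=
    (hasDerivAt_pow (j : ℕ) 0).const_mul _
  refine h1.congr_deriv ?_
  rcases j with ⟨k, hk⟩
  rcases k with _ | k
  · norm_num
  · rcases k with _ | k
    · norm_num
    · simp [pow_succ]

lemma contDiff_phi (t : Fin N → ℝ) : ContDiff ℝ ∞ (phi N t) :=
  contDiff_pi.2 fun _ =>
    contDiff_const.add ((contDiff_const.mul (contDiff_id.pow _)).div_const _)

lemma contDiff_psi (t : Fin N → ℝ) : ContDiff ℝ ∞ (psi N t) :=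
  contDiff_pi.2 fun _ =>
    contDiff_const.sub ((contDiff_const.mul (contDiff_id.pow _)).div_const _)

lemma partialD_eq_fderiv {f : (Fin N → ℝ) → ℝ} (hf : Differentiable ℝ f) (i : Fin N)
    (u : Fin N → ℝ) : partialD i f u = fderiv ℝ f u (Pi.single i 1) := by
  have h : HasDerivAt (fun s => f (Function.update u i s))
      (fderiv ℝ f u (Pi.single i 1)) (u i) :=
    ((hf u).hasFDerivAt).comp_hasDerivAt_of_eq (u i) (hasDerivAt_update u i (u i))
      (Function.update_eq_self i u).symm
  exact h.deriv

lemma partialD_partialD {q : (Fin N → ℝ) → ℝ} (hq : ContDiff ℝ (⊤ : ℕ∞) q) (t : Fin N → ℝ)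
    (i : Fin N) :
    partialD i (partialD i q) t
      = (fderiv ℝ (fderiv ℝ q) t (Pi.single i 1)) (Pi.single i 1) := by
  have hqd : Differentiable ℝ q := hq.differentiable (by simp)
  have hDq : ContDiff ℝ ∞ (fderiv ℝ q) := hq.fderiv_right (by simp)
  have hDqd : Differentiable ℝ (fderiv ℝ q) := hDq.differentiable (by simp)
  have hw : ContDiff ℝ ∞ (fun u => fderiv ℝ q u (Pi.single i 1)) := by
    have h2 : (fun u => fderiv ℝ q u (Pi.single i 1))
        = (fun L : (Fin N → ℝ) →L[ℝ] ℝ => L (Pi.single i 1)) ∘ (fderiv ℝ q) := rfl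
    rw [h2]
    exact (ContinuousLinearMap.apply ℝ ℝ (Pi.single i 1)).contDiff.comp hDq
  have hpq : partialD i q = fun u => fderiv ℝ q u (Pi.single i 1) := by
    funext u; exact partialD_eq_fderiv hqd i u
  rw [hpq, partialD_eq_fderiv (hw.differentiable (by simp)) i t]
  rw [fderiv_clm_apply (hDqd t) (differentiableAt_const (Pi.single i 1))]
  simp

end TodaAux

open TodaAux

/-- The main expansion: the rescaled discrete Toda expression vanishes to second order. -/
lemma TodaAux.main_aux (N : ℕ) (hN : 2 ≤ N)
    (qm q qp : (Fin N → ℝ) → ℝ)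
    (hqm : ContDiff ℝ (⊤ : ℕ∞) qm) (hq : ContDiff ℝ (⊤ : ℕ∞) q) (hqp : ContDiff ℝ (⊤ : ℕ∞) qp)
    (t : Fin N → ℝ) :
    (fun lam : ℝ =>
      Real.exp (q (phi N t lam) - q t) - Real.exp (q t - q (psi N t lam))
        + lam ^ 2 * ((Real.exp (q t - qm (phi N t lam)) - Real.exp (qp (psi N t lam) - q t))
          - (partialD (⟨0, lt_of_lt_of_le two_pos hN⟩ : Fin N) (partialD (⟨0, lt_of_lt_of_le two_pos hN⟩ : Fin N) q) t
            - Real.exp (qp t - q t) + Real.exp (q t - qm t))))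
      =O[nhds 0] fun lam => lam ^ 3 := by
  have hNpos : 0 < N := by omega
  have hq' : ContDiff ℝ ∞ q := hq.of_le (by simp)
  have hqm' : ContDiff ℝ ∞ qm := hqm.of_le (by simp)
  have hqp' : ContDiff ℝ ∞ qp := hqp.of_le (by simp)
  have hqd : Differentiable ℝ q := hq'.differentiable (by simp)
  have hDq : ContDiff ℝ ∞ (fderiv ℝ q) := hq.fderiv_right (by simp)
  have hDqd : Differentiable ℝ (fderiv ℝ q) := hDq.differentiable (by simp)
  set j0 : Fin N := ⟨0, by omega⟩ with hj0
  set K : ℝ := partialD j0 (partialD j0 q) t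
      - Real.exp (qp t - q t) + Real.exp (q t - qm t) with hK
  set S : ℝ → ℝ := fun lam =>
      Real.exp (q t - qm (phi N t lam)) - Real.exp (qp (psi N t lam) - q t) with hS
  set G : ℝ → ℝ := fun lam =>
      Real.exp (q (phi N t lam) - q t) - Real.exp (q t - q (psi N t lam))
        + lam ^ 2 * (S lam - K) with hG
  show G =O[nhds 0] fun lam => lam ^ 3
  -- smoothness
  have hAq : ContDiff ℝ ∞ (fun lam => q (phi N t lam)) := hq'.comp (contDiff_phi t)
  have hBq : ContDiff ℝ ∞ (fun lam => q (psi N t lam)) := hq'.comp (contDiff_psi t)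
  have hSc : ContDiff ℝ ∞ S :=
    ((contDiff_const.sub (hqm'.comp (contDiff_phi t))).exp).sub
      (((hqp'.comp (contDiff_psi t)).sub contDiff_const).exp)
  have hGc : ContDiff ℝ ∞ G :=
    (((hAq.sub contDiff_const).exp).sub ((contDiff_const.sub hBq).exp)).add
      ((contDiff_id.pow 2).mul (hSc.sub contDiff_const))
  set h : ℝ → ℝ := fun lam => lam ^ 2 * (S lam - K) with hh
  have hhc : ContDiff ℝ ∞ h := (contDiff_id.pow 2).mul (hSc.sub contDiff_const)
  have hSd : Differentiable ℝ S := hSc.differentiable (by simp)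
  have hhd : Differentiable ℝ h := hhc.differentiable (by simp)
  have hdSd : Differentiable ℝ (deriv S) :=
    ((contDiff_infty_iff_deriv.mp hSc).2).differentiable (by simp)
  -- first derivative of G
  have hAq' : ∀ lam, HasDerivAt (fun l => q (phi N t l))
      (fderiv ℝ q (phi N t lam) (phid N lam)) lam :=
    fun lam => ((hqd (phi N t lam)).hasFDerivAt).comp_hasDerivAt lam (hasDerivAt_phi t lam)
  have hBq' : ∀ lam, HasDerivAt (fun l => q (psi N t l))
      (fderiv ℝ q (psi N t lam) (-(phid N lam))) lam :=
    fun lam => ((hqd (psi N t lam)).hasFDerivAt).comp_hasDerivAt lam (hasDerivAt_psi t lam)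
  set G₁ : ℝ → ℝ := fun lam =>
      Real.exp (q (phi N t lam) - q t) * (fderiv ℝ q (phi N t lam) (phid N lam))
        - Real.exp (q t - q (psi N t lam)) * (0 - fderiv ℝ q (psi N t lam) (-(phid N lam)))
        + deriv h lam with hG₁
  have hG' : ∀ lam, HasDerivAt G (G₁ lam) lam := fun lam =>
    ((((hAq' lam).sub_const (q t)).exp).sub
      (((hasDerivAt_const lam (q t)).sub (hBq' lam)).exp)).add ((hhd lam).hasDerivAt)
  have hderivG : deriv G = G₁ := funext fun lam => (hG' lam).deriv
  -- formula for deriv h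
  have hderivh : deriv h
      = fun lam => ((2:ℕ):ℝ) * lam ^ 1 * (S lam - K) + lam ^ 2 * deriv S lam := by
    funext lam
    exact ((hasDerivAt_pow 2 lam).mul (((hSd lam).hasDerivAt).sub_const K)).deriv
  -- value G 0 = 0
  have hG0 : G 0 = 0 := by
    simp [hG, phi_zero, psi_zero]
  -- deriv h 0 = 0
  have hderivh0 : deriv h 0 = 0 := by
    rw [hderivh]; norm_num
  -- deriv G 0 = 0
  have hG10 : deriv G 0 = 0 := by
    rw [hderivG, hG₁]
    simp [phi_zero, psi_zero, hderivh0, map_neg]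
  -- second derivative pieces at 0
  have hc1 : HasDerivAt (fun lam => fderiv ℝ q (phi N t lam))
      (fderiv ℝ (fderiv ℝ q) t (phid N 0)) 0 := by
    have h1 : HasFDerivAt (fderiv ℝ q) (fderiv ℝ (fderiv ℝ q) t) (phi N t 0) := by
      rw [phi_zero]; exact (hDqd t).hasFDerivAt
    exact h1.comp_hasDerivAt 0 (hasDerivAt_phi t 0)
  have hc2 : HasDerivAt (fun lam => fderiv ℝ q (psi N t lam))
      (fderiv ℝ (fderiv ℝ q) t (-(phid N 0))) 0 := by
    have h1 : HasFDerivAt (fderiv ℝ q) (fderiv ℝ (fderiv ℝ q) t) (psi N t 0) := by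
      rw [psi_zero]; exact (hDqd t).hasFDerivAt
    exact h1.comp_hasDerivAt 0 (hasDerivAt_psi t 0)
  set e1m : Fin N → ℝ := fun j : Fin N => if (j : ℕ) = 1 then (-1 : ℝ) else 0 with he1m
  have hu1 : HasDerivAt (phid N) e1m 0 := hasDerivAt_phid_zero
  have hclm1 : HasDerivAt (fun lam => fderiv ℝ q (phi N t lam) (phid N lam))
      ((fderiv ℝ (fderiv ℝ q) t (phid N 0)) (phid N 0) + fderiv ℝ q (phi N t 0) e1m) 0 :=
    hc1.clm_apply hu1
  have hclm2 : HasDerivAt (fun lam => fderiv ℝ q (psi N t lam) (-(phid N lam)))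
      ((fderiv ℝ (fderiv ℝ q) t (-(phid N 0))) (-(phid N 0))
        + fderiv ℝ q (psi N t 0) (-e1m)) 0 :=
    hc2.clm_apply hu1.neg
  have hexp1 : HasDerivAt (fun lam => Real.exp (q (phi N t lam) - q t))
      (Real.exp (q (phi N t 0) - q t) * (fderiv ℝ q (phi N t 0) (phid N 0))) 0 :=
    ((hAq' 0).sub_const (q t)).exp
  have hexp2 : HasDerivAt (fun lam => Real.exp (q t - q (psi N t lam)))
      (Real.exp (q t - q (psi N t 0)) * (0 - fderiv ℝ q (psi N t 0) (-(phid N 0)))) 0 :=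
    ((hasDerivAt_const 0 (q t)).sub (hBq' 0)).exp
  have hinner : HasDerivAt (fun lam => (0:ℝ) - fderiv ℝ q (psi N t lam) (-(phid N lam)))
      (0 - ((fderiv ℝ (fderiv ℝ q) t (-(phid N 0))) (-(phid N 0))
        + fderiv ℝ q (psi N t 0) (-e1m))) 0 :=
    (hasDerivAt_const 0 (0:ℝ)).sub hclm2
  have hz3 : HasDerivAt (deriv h) (2 * (S 0 - K)) 0 := by
    rw [hderivh]
    have hDh := ((((hasDerivAt_pow 1 (0:ℝ)).const_mul (((2:ℕ):ℝ))).mul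
        (((hSd 0).hasDerivAt).sub_const K)).add
        ((hasDerivAt_pow 2 (0:ℝ)).mul ((hdSd 0).hasDerivAt)))
    refine hDh.congr_deriv ?_
    norm_num
  have hT1 := hexp1.mul hclm1
  have hT2 := hexp2.mul hinner
  have hG₁' : HasDerivAt G₁ _ 0 := (hT1.sub hT2).add hz3
  -- second derivative of G at 0 vanishes
  have hG20 : deriv (deriv G) 0 = 0 := by
    rw [hderivG, hG₁'.deriv]
    have hq11 : partialD j0 (partialD j0 q) t
        = (fderiv ℝ (fderiv ℝ q) t (Pi.single j0 1)) (Pi.single j0 1) :=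
      partialD_partialD hq t j0
    have hphid0 : phid N 0 = Pi.single j0 (1:ℝ) := phid_zero hNpos
    rw [hphid0]
    simp only [phi_zero, psi_zero, sub_self, Real.exp_zero, one_mul, map_neg,
      ContinuousLinearMap.neg_apply, neg_neg, hS, hK, hq11]
    simp [phi_zero, psi_zero]
    ring
  exact TodaAux.cube_bigO hGc hG0 hG10 hG20

/-- the leading coefficient of the Miwa expansion of the discrete Toda
equation is the first Toda equation `∂₁∂₁q = exp(q⁺−q) − exp(q−q⁻)`: as `λ → 0`,
`(1/λ)(exp(S_λq−q) − exp(q−S_λ⁻q)) + λ(exp(q−S_λq⁻) − exp(S_λ⁻q⁺−q))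
  = λ(∂₁∂₁q − exp(q⁺−q) + exp(q−q⁻)) + O(λ²)`. -/
theorem toda_equation_leading_coefficient (N : ℕ) (hN : 2 ≤ N)
    (qm q qp : (Fin N → ℝ) → ℝ)
    (hqm : ContDiff ℝ (⊤ : ℕ∞) qm) (hq : ContDiff ℝ (⊤ : ℕ∞) q) (hqp : ContDiff ℝ (⊤ : ℕ∞) qp)
    (t : Fin N → ℝ) :
    Asymptotics.IsBigO (nhds (0 : ℝ))
      (fun lam : ℝ =>
        (1 / lam) * (Real.exp (miwaShift N lam q t - q t)
            - Real.exp (q t - miwaShiftB N lam q t))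
          + lam * (Real.exp (q t - miwaShift N lam qm t)
            - Real.exp (miwaShiftB N lam qp t - q t))
          - lam * (partialD (⟨0, by omega⟩ : Fin N) (partialD (⟨0, by omega⟩ : Fin N) q) t
            - Real.exp (qp t - q t) + Real.exp (q t - qm t)))
      (fun lam : ℝ => lam ^ 2) := by
  have haux := TodaAux.main_aux N hN qm q qp hqm hq hqp t
  have h2 := haux.mul (Asymptotics.isBigO_refl (fun lam : ℝ => lam⁻¹) (nhds (0:ℝ)))
  have h3 : (fun lam : ℝ => lam ^ 3 * lam⁻¹) =O[nhds (0:ℝ)] fun lam => lam ^ 2 := by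
    rw [Asymptotics.isBigO_iff]
    refine ⟨1, Filter.Eventually.of_forall fun x => ?_⟩
    rcases eq_or_ne x 0 with rfl | hx
    · simp
    · have hxx : x ^ 3 * x⁻¹ = x ^ 2 := by field_simp
      rw [hxx, one_mul]
  have h4 := h2.trans h3
  refine h4.congr' (Filter.Eventually.of_forall fun lam => ?_)
    (Filter.EventuallyEq.refl _ _)
  rcases eq_or_ne lam 0 with rfl | hlam
  · simp [miwaShift, miwaShiftB]
  · show (Real.exp (q (phi N t lam) - q t) - Real.exp (q t - q (psi N t lam))
        + lam ^ 2 * ((Real.exp (q t - qm (phi N t lam)) - Real.exp (qp (psi N t lam) - q t))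
          - (partialD (⟨0, by omega⟩ : Fin N) (partialD (⟨0, by omega⟩ : Fin N) q) t
            - Real.exp (qp t - q t) + Real.exp (q t - qm t)))) * lam⁻¹
      = (1 / lam) * (Real.exp (q (phi N t lam) - q t) - Real.exp (q t - q (psi N t lam)))
        + lam * (Real.exp (q t - qm (phi N t lam)) - Real.exp (qp (psi N t lam) - q t))
        - lam * (partialD (⟨0, by omega⟩ : Fin N) (partialD (⟨0, by omega⟩ : Fin N) q) t
            - Real.exp (qp t - q t) + Real.exp (q t - qm t))
    field_simp
    ring
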